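/- arXiv:1111.0661 — 2 statements merged into one kernel-verified Lean document; each statement's English description precedes it below -/
import Mathlib

section
/- (von Neumann's inequality, matrix/dilation version) Let C be a bounded operator on a complex Hilbert space with ‖C‖ ≤ 1, and let p be a polynomial with complex coefficients. Then ‖p(C)‖ ≤ sup{|p(z)| : |z| ≤ 1}. -/
open Finset Polynomial ComplexConjugate Filter Topology
open scoped InnerProductSpace

/-! For `‖T‖ ≤ 1` the truncated operator Poisson kernels `K(z) = D(z) (1 - T T*) D(z)*`, with
`D(z) = ∑_{n<L} z̄ⁿ Tⁿ`, are positive. Averaged against `zʲ` over the `2L`-th roots of unity they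
give `Tʲ - Tᴸ T*ᴸ⁻ʲ` (orthogonality of characters, then a telescoping sum), so `p(T)` is, up to an
error of size `O(‖Tᴸ‖)`, an average of the positive operators `K(ωᵏ)` weighted by the values
`p(ωᵏ)`. Such a combination has norm at most `max |p(ωᵏ)|` times the norm of the unweighted
average, which tends to `1`. Hence `‖p(T)‖ ≤ sup_{|z|=1} |p z|` when `‖T‖ < 1`, and a contraction
`C` is handled by letting `r → 1` in `p(rC)`.
-/

theorem geom_sum_eq_ite_of_pow_eq_one {K : Type*} [DivisionRing K] [DecidableEq K] {ζ : K}
    {N : ℕ} (h : ζ ^ N = 1) : ∑ k ∈ range N, ζ ^ k = if ζ = 1 then (N : K) else 0 := by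
  split_ifs with h1
  · simp [h1]
  · rw [geom_sum_eq h1, h, sub_self, zero_div]

theorem IsPrimitiveRoot.sum_pow_mul_conj_pow {ω : ℂ} {N : ℕ} (hω : IsPrimitiveRoot ω N)
    {a b : ℕ} (ha : a < N) (hb : b < N) :
    ∑ k ∈ range N, (ω ^ k) ^ a * conj (ω ^ k) ^ b = if a = b then (N : ℂ) else 0 := by
  have hω0 : ω ≠ 0 := hω.ne_zero (by omega)
  have hconj : conj ω = ω⁻¹ := (Complex.inv_eq_conj (hω.norm'_eq_one (by omega))).symm
  have hterm : ∀ k, (ω ^ k) ^ a * conj (ω ^ k) ^ b = (ω ^ a * (ω ^ b)⁻¹) ^ k := fun k => by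
    rw [map_pow, hconj]
    ring
  have hroot : (ω ^ a * (ω ^ b)⁻¹) ^ N = 1 := by
    rw [mul_pow, inv_pow, ← pow_mul, ← pow_mul, mul_comm a, mul_comm b, pow_mul, pow_mul,
      hω.pow_eq_one, one_pow, one_pow, inv_one, mul_one]
  simp_rw [hterm, geom_sum_eq_ite_of_pow_eq_one hroot, mul_inv_eq_one₀ (pow_ne_zero _ hω0)]
  exact if_congr ⟨fun h => hω.pow_inj ha hb h, fun h => h ▸ rfl⟩ rfl rfl

theorem sum_range_pow_mul_one_sub_mul_mul_pow {R : Type*} [Ring R] (T S : R) (j M : ℕ) :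
    ∑ n ∈ range M, T ^ (j + n) * (1 - T * S) * S ^ n = T ^ j - T ^ (j + M) * S ^ M := by
  induction M with
  | zero => simp
  | succ M ih =>
    rw [sum_range_succ, ih, ← add_assoc, pow_succ T (j + M), pow_succ' S M]
    noncomm_ring

section Kernel

variable {A : Type*} [Ring A] [StarRing A] [Algebra ℂ A] [StarModule ℂ A]

def truncResolvent (T : A) (L : ℕ) (z : ℂ) : A := ∑ n ∈ range L, conj z ^ n • T ^ n

/-- A truncation of the operator Poisson kernel `(1 - z̄ T)⁻¹ (1 - T T*) (1 - z T*)⁻¹`. -/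
def truncPoissonKernel (T : A) (L : ℕ) (z : ℂ) : A :=
  truncResolvent T L z * (1 - T * star T) * star (truncResolvent T L z)

theorem pow_smul_truncPoissonKernel (T : A) (L j : ℕ) (z : ℂ) :
    z ^ j • truncPoissonKernel T L z = ∑ m ∈ range L, ∑ n ∈ range L,
      (z ^ (j + n) * conj z ^ m) • (T ^ m * (1 - T * star T) * star T ^ n) := by
  simp only [truncPoissonKernel, truncResolvent, star_sum, star_smul, star_pow, RCLike.star_def,
    Complex.conj_conj, sum_mul, mul_sum, smul_sum]
  rw [sum_comm]
  refine sum_congr rfl fun m _ => sum_congr rfl fun n _ => ?_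
  simp only [smul_mul_assoc, mul_smul_comm, smul_smul, pow_add]
  congr 1
  ring

theorem IsPrimitiveRoot.sum_pow_smul_truncPoissonKernel {ω : ℂ} {N : ℕ}
    (hω : IsPrimitiveRoot ω N) (T : A) {L j : ℕ} (hj : j ≤ L) (hN : j + L ≤ N) :
    ∑ k ∈ range N, (ω ^ k) ^ j • truncPoissonKernel T L (ω ^ k) =
      (N : ℂ) • (T ^ j - T ^ L * star T ^ (L - j)) := by
  have hdiag : (range L).filter (fun n => j + n ∈ range L) = range (L - j) := by
    ext n; simp only [mem_filter, mem_range]; omega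
  calc ∑ k ∈ range N, (ω ^ k) ^ j • truncPoissonKernel T L (ω ^ k)
      = ∑ n ∈ range L, ∑ m ∈ range L, (if j + n = m then (N : ℂ) else 0) •
          (T ^ m * (1 - T * star T) * star T ^ n) := by
        simp_rw [pow_smul_truncPoissonKernel]
        rw [sum_comm]
        simp_rw [sum_comm (s := range N)]
        rw [sum_comm]
        refine sum_congr rfl fun n hn => sum_congr rfl fun m hm => ?_
        rw [mem_range] at hn hm
        rw [← sum_smul, hω.sum_pow_mul_conj_pow (by omega) (by omega)]
    _ = ∑ n ∈ range (L - j), (N : ℂ) • (T ^ (j + n) * (1 - T * star T) * star T ^ n) := by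
        simp_rw [ite_smul, zero_smul, sum_ite_eq, ← sum_filter, hdiag]
    _ = (N : ℂ) • (T ^ j - T ^ L * star T ^ (L - j)) := by
        rw [← smul_sum, sum_range_pow_mul_one_sub_mul_mul_pow, Nat.add_sub_cancel' hj]


theorem IsPrimitiveRoot.sum_eval_smul_truncPoissonKernel {ω : ℂ} {N : ℕ}
    (hω : IsPrimitiveRoot ω N) (T : A) (p : ℂ[X]) {L : ℕ} (hp : p.natDegree ≤ L)
    (hN : 2 * L ≤ N) :
    ∑ k ∈ range N, p.eval (ω ^ k) • truncPoissonKernel T L (ω ^ k) =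
      (N : ℂ) • (aeval T p -
        T ^ L * ∑ j ∈ range (p.natDegree + 1), p.coeff j • star T ^ (L - j)) := by
  have hcoeff : ∀ j ∈ range (p.natDegree + 1),
      ∑ k ∈ range N, (p.coeff j * (ω ^ k) ^ j) • truncPoissonKernel T L (ω ^ k) =
        p.coeff j • (N : ℂ) • (T ^ j - T ^ L * star T ^ (L - j)) := fun j hj => by
    rw [mem_range] at hj
    simp_rw [mul_smul, ← smul_sum]
    rw [hω.sum_pow_smul_truncPoissonKernel T (by omega) (by omega)]
  simp_rw [eval_eq_sum_range, sum_smul]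
  rw [sum_comm, sum_congr rfl hcoeff, aeval_eq_sum_range]
  simp_rw [smul_comm (p.coeff _) (N : ℂ), ← smul_sum, smul_sub, sum_sub_distrib, mul_sum,
    mul_smul_comm, smul_sub]

end Kernel

namespace ContinuousLinearMap

theorem opNorm_le_of_norm_inner_le {𝕜 E F : Type*} [RCLike 𝕜] [NormedAddCommGroup E]
    [InnerProductSpace 𝕜 E] [NormedAddCommGroup F] [InnerProductSpace 𝕜 F] (A : E →L[𝕜] F)
    {c : ℝ} (hc : 0 ≤ c) (h : ∀ x y, ‖⟪A x, y⟫_𝕜‖ ≤ c * ‖x‖ * ‖y‖) : ‖A‖ ≤ c := by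
  refine A.opNorm_le_bound hc fun x => ?_
  rcases (norm_nonneg (A x)).eq_or_lt with hAx | hAx
  · rw [← hAx]; positivity
  · refine le_of_mul_le_mul_right ?_ hAx
    calc ‖A x‖ * ‖A x‖ = RCLike.re ⟪A x, A x⟫_𝕜 := (inner_self_eq_norm_mul_norm _).symm
      _ ≤ ‖⟪A x, A x⟫_𝕜‖ := RCLike.re_le_norm _
      _ ≤ c * ‖x‖ * ‖A x‖ := h x (A x)

variable {H : Type*} [NormedAddCommGroup H] [InnerProductSpace ℂ H] [CompleteSpace H]

theorem norm_sum_smul_le_of_nonneg {ι : Type*} (s : Finset ι) {a : ι → H →L[ℂ] H}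
    (ha : ∀ i ∈ s, 0 ≤ a i) (c : ι → ℂ) {M : ℝ} (hM : 0 ≤ M) (hc : ∀ i ∈ s, ‖c i‖ ≤ M) :
    ‖∑ i ∈ s, c i • a i‖ ≤ M * ‖∑ i ∈ s, a i‖ := by
  choose! b hb using fun i hi => CStarAlgebra.nonneg_iff_eq_star_mul_self.mp (ha i hi)
  have hinner : ∀ i ∈ s, ∀ x y, ⟪a i x, y⟫_ℂ = ⟪b i x, b i y⟫_ℂ := fun i hi x y => by
    rw [hb i hi, star_eq_adjoint, mul_apply_eq_comp, adjoint_inner_left]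
  have hsqrt : ∀ x, √(∑ i ∈ s, ‖b i x‖ ^ 2) ≤ √‖∑ i ∈ s, a i‖ * ‖x‖ := fun x => by
    have hsum : ∑ i ∈ s, ‖b i x‖ ^ 2 = RCLike.re ⟪(∑ i ∈ s, a i) x, x⟫_ℂ := by
      rw [_root_.sum_apply, sum_inner, map_sum]
      exact sum_congr rfl fun i hi => by rw [hinner i hi, inner_self_eq_norm_sq]
    rw [← Real.sqrt_sq (norm_nonneg x), ← Real.sqrt_mul (norm_nonneg _), hsum]
    refine Real.sqrt_le_sqrt ((RCLike.re_le_norm _).trans ((norm_inner_le_norm _ _).trans ?_))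
    rw [sq, ← mul_assoc]
    exact mul_le_mul_of_nonneg_right (le_opNorm _ _) (norm_nonneg _)
  refine opNorm_le_of_norm_inner_le _ (by positivity) fun x y => ?_
  calc ‖⟪(∑ i ∈ s, c i • a i) x, y⟫_ℂ‖
      = ‖∑ i ∈ s, conj (c i) * ⟪b i x, b i y⟫_ℂ‖ := by
        simp_rw [_root_.sum_apply, sum_inner, _root_.smul_apply, inner_smul_left]
        exact congrArg _ (sum_congr rfl fun i hi => by rw [hinner i hi])
    _ ≤ ∑ i ∈ s, M * (‖b i x‖ * ‖b i y‖) := by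
        refine (norm_sum_le _ _).trans (sum_le_sum fun i hi => ?_)
        rw [norm_mul, RCLike.norm_conj]
        exact mul_le_mul (hc i hi) (norm_inner_le_norm _ _) (norm_nonneg _) hM
    _ ≤ M * (√(∑ i ∈ s, ‖b i x‖ ^ 2) * √(∑ i ∈ s, ‖b i y‖ ^ 2)) := by
        rw [← mul_sum]
        exact mul_le_mul_of_nonneg_left (Real.sum_mul_le_sqrt_mul_sqrt _ _ _) hM
    _ ≤ M * ((√‖∑ i ∈ s, a i‖ * ‖x‖) * (√‖∑ i ∈ s, a i‖ * ‖y‖)) := by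
        gcongr
        · exact hsqrt x
        · exact hsqrt y
    _ = M * ‖∑ i ∈ s, a i‖ * ‖x‖ * ‖y‖ := by
        rw [mul_mul_mul_comm, Real.mul_self_sqrt (norm_nonneg _)]
        ring

end ContinuousLinearMap

theorem truncPoissonKernel_nonneg {A : Type*} [CStarAlgebra A] [PartialOrder A]
    [StarOrderedRing A] {T : A} (hT : ‖T‖ ≤ 1) (L : ℕ) (z : ℂ) :
    0 ≤ truncPoissonKernel T L z := by
  have hTT : T * star T ≤ 1 := by
    refine CStarAlgebra.mul_star_le_algebraMap_norm_sq.trans ?_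
    rw [← map_one (algebraMap ℝ A)]
    exact algebraMap_mono A (pow_le_one₀ (norm_nonneg _) hT)
  exact star_right_conjugate_nonneg (sub_nonneg.mpr hTT) _

section Contraction

variable {H : Type*} [NormedAddCommGroup H] [InnerProductSpace ℂ H] [CompleteSpace H]

theorem norm_aeval_le_add_norm_pow {T : H →L[ℂ] H} (hT : ‖T‖ ≤ 1) (p : ℂ[X]) {M : ℝ}
    (hM : ∀ z : ℂ, ‖z‖ = 1 → ‖p.eval z‖ ≤ M) {L : ℕ} (hL : p.natDegree < L) :
    ‖aeval T p‖ ≤ M * ‖1 - T ^ L * star T ^ L‖ +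
      ‖T ^ L‖ * ∑ j ∈ range (p.natDegree + 1), ‖p.coeff j‖ := by
  have hM0 : 0 ≤ M := (norm_nonneg _).trans (hM 1 norm_one)
  have hN : 2 * L ≠ 0 := by omega
  have hω := Complex.isPrimitiveRoot_exp (2 * L) hN
  set ω := Complex.exp (2 * Real.pi * Complex.I / (2 * L : ℕ))
  set K := fun k : ℕ => truncPoissonKernel T L (ω ^ k)
  set R := ∑ j ∈ range (p.natDegree + 1), p.coeff j • star T ^ (L - j)
  have hN' : ((2 * L : ℕ) : ℂ) ≠ 0 := Nat.cast_ne_zero.mpr hN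
  have hsumK : ((2 * L : ℕ) : ℂ)⁻¹ • ∑ k ∈ range (2 * L), K k = 1 - T ^ L * star T ^ L := by
    have := hω.sum_pow_smul_truncPoissonKernel T (Nat.zero_le L) (by omega)
    simp only [pow_zero, one_smul, Nat.sub_zero] at this
    rw [this, inv_smul_smul₀ hN']
  have hsplit : aeval T p =
      ((2 * L : ℕ) : ℂ)⁻¹ • ∑ k ∈ range (2 * L), p.eval (ω ^ k) • K k + T ^ L * R := by
    rw [hω.sum_eval_smul_truncPoissonKernel T p hL.le le_rfl, inv_smul_smul₀ hN',
      sub_add_cancel]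
  have hR : ‖R‖ ≤ ∑ j ∈ range (p.natDegree + 1), ‖p.coeff j‖ := by
    refine (norm_sum_le _ _).trans (sum_le_sum fun j hj => ?_)
    rw [mem_range] at hj
    rw [norm_smul]
    refine mul_le_of_le_one_right (norm_nonneg _) ((norm_pow_le' _ (by omega)).trans ?_)
    exact pow_le_one₀ (norm_nonneg _) (by rwa [norm_star])
  have hω_norm : ∀ k, ‖ω ^ k‖ = 1 := fun k => by
    rw [norm_pow, hω.norm'_eq_one hN, one_pow]
  calc ‖aeval T p‖
      ≤ ‖((2 * L : ℕ) : ℂ)⁻¹ • ∑ k ∈ range (2 * L), p.eval (ω ^ k) • K k‖ + ‖T ^ L * R‖ := by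
        rw [hsplit]; exact norm_add_le _ _
    _ ≤ M * ‖1 - T ^ L * star T ^ L‖ + ‖T ^ L‖ * ∑ j ∈ range (p.natDegree + 1), ‖p.coeff j‖ := by
        gcongr
        · rw [← hsumK, norm_smul, norm_smul, mul_left_comm]
          refine mul_le_mul_of_nonneg_left ?_ (norm_nonneg _)
          exact ContinuousLinearMap.norm_sum_smul_le_of_nonneg _
            (fun k _ => truncPoissonKernel_nonneg hT L _) _ hM0 fun k _ => hM _ (hω_norm k)
        · exact (norm_mul_le _ _).trans (mul_le_mul_of_nonneg_left hR (norm_nonneg _))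

theorem norm_aeval_le_of_norm_lt_one {T : H →L[ℂ] H} (hT : ‖T‖ < 1) (p : ℂ[X]) {M : ℝ}
    (hM : ∀ z : ℂ, ‖z‖ = 1 → ‖p.eval z‖ ≤ M) : ‖aeval T p‖ ≤ M := by
  have hM0 : 0 ≤ M := (norm_nonneg _).trans (hM 1 norm_one)
  have hpow : Tendsto (T ^ ·) atTop (𝓝 0) := tendsto_pow_atTop_nhds_zero_of_norm_lt_one hT
  have hpow' : Tendsto (star T ^ ·) atTop (𝓝 0) :=
    tendsto_pow_atTop_nhds_zero_of_norm_lt_one (by rwa [norm_star])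
  have hbound : Tendsto (fun L => M * ‖1 - T ^ L * star T ^ L‖ +
      ‖T ^ L‖ * ∑ j ∈ range (p.natDegree + 1), ‖p.coeff j‖) atTop
      (𝓝 (M * ‖(1 : H →L[ℂ] H)‖)) := by
    simpa using ((tendsto_const_nhds.sub (hpow.mul hpow')).norm.const_mul M).add
      (hpow.norm.mul_const _)
  calc ‖aeval T p‖ ≤ M * ‖(1 : H →L[ℂ] H)‖ := ge_of_tendsto hbound <|
        (eventually_gt_atTop p.natDegree).mono fun L hL =>
          norm_aeval_le_add_norm_pow hT.le p hM hL
    _ ≤ M := mul_le_of_le_one_right hM0 ContinuousLinearMap.norm_id_le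

end Contraction

/-- **von Neumann's inequality.** If `C` is a contraction on a complex
Hilbert space and `p` a polynomial with complex coefficients, then
`‖p(C)‖ ≤ sup {|p(z)| : |z| ≤ 1}`. -/
theorem von_neumann_inequality {H : Type*} [NormedAddCommGroup H]
    [InnerProductSpace ℂ H] [CompleteSpace H]
    (C : H →L[ℂ] H) (hC : ‖C‖ ≤ 1) (p : Polynomial ℂ) :
    ‖Polynomial.aeval C p‖ ≤
      sSup ((fun z => ‖Polynomial.eval z p‖) '' Metric.closedBall (0 : ℂ) 1) := by
  set M := sSup ((fun z => ‖Polynomial.eval z p‖) '' Metric.closedBall (0 : ℂ) 1)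
  have hM : ∀ z : ℂ, ‖z‖ = 1 → ‖p.eval z‖ ≤ M := fun z hz =>
    le_csSup ((isCompact_closedBall 0 1).image (continuous_norm.comp p.continuous)).bddAbove
      ⟨z, by simp [hz], rfl⟩
  have hscaled : ∀ r ∈ Set.Ioo (0 : ℝ) 1, ‖aeval ((r : ℂ) • C) p‖ ≤ M := fun r hr => by
    refine norm_aeval_le_of_norm_lt_one ?_ p hM
    rw [norm_smul, Complex.norm_real, Real.norm_of_nonneg hr.1.le]
    exact (mul_le_of_le_one_right hr.1.le hC).trans_lt hr.2
  have hlim : Tendsto (fun r : ℝ => aeval ((r : ℂ) • C) p) (𝓝[<] 1) (𝓝 (aeval C p)) := by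
    have hcont : Continuous fun r : ℝ => aeval ((r : ℂ) • C) p :=
      p.continuous_aeval.comp (by fun_prop)
    simpa using (hcont.tendsto 1).mono_left nhdsWithin_le_nhds
  exact le_of_tendsto hlim.norm (eventually_of_mem (Ioo_mem_nhdsLT zero_lt_one) hscaled)
end

section
/- Let δ be an m-tuple of polynomials in d variables, suppose φ : G_δ → ℂ is of the form φ(λ) = a + ⟪δ(λ)(1 − D δ(λ))⁻¹ γ, β⟫ where V = [[a, 1⊗β],[γ⊗1, D]] is an isometry on ℂ ⊕ M for a decomposed Hilbert space M = ⊕_{l=1}^m M_l, and δ(λ) acts on M by δ(λ)(⊕ x_l) = ⊕ δ_l(λ) x_l. Then |φ(λ)| ≤ 1 for every λ ∈ G_δ. -/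
/-!
Write `z = δ(λ)`, so `‖z‖ < 1` in the sup norm and the diagonal operator `Δ z` has norm at most
`‖z‖`. The isometry `V` makes `D` a contraction, so `1 - D Δ z` is invertible by the Neumann
series and `u = (1 - D Δ z)⁻¹ γ` solves `u = γ + D (Δ z u)`. Applying `V` to `(1, Δ z u)` gives
`|φ(λ)|² + ‖u‖² = 1 + ‖Δ z u‖² ≤ 1 + ‖u‖²`.
-/

open ContinuousLinearMap

section Colligation

variable {E : Type*} [NormedAddCommGroup E] [InnerProductSpace ℂ E]

/-- `V = [[a, ⟪β, ·⟫], [γ, D]]` is an isometry of `ℂ ⊕ E`. -/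
def IsIsometricColligation (a : ℂ) (β γ : E) (D : E →L[ℂ] E) : Prop :=
  ∀ (c : ℂ) (x : E), ‖a * c + inner ℂ β x‖ ^ 2 + ‖c • γ + D x‖ ^ 2 = ‖c‖ ^ 2 + ‖x‖ ^ 2

variable {a : ℂ} {β γ : E} {D : E →L[ℂ] E}

theorem IsIsometricColligation.opNorm_le_one (hV : IsIsometricColligation a β γ D) :
    ‖D‖ ≤ 1 := by
  refine opNorm_le_bound _ zero_le_one fun x => ?_
  have h := hV 0 x
  simp only [mul_zero, zero_smul, zero_add, norm_zero] at h
  rw [one_mul]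
  exact pow_le_pow_iff_left₀ (norm_nonneg _) (norm_nonneg _) two_ne_zero |>.mp <| by
    nlinarith [sq_nonneg ‖inner ℂ β x‖]

theorem IsIsometricColligation.norm_add_inner_le_one (hV : IsIsometricColligation a β γ D)
    {u v : E} (hu : γ + D v = u) (hvu : ‖v‖ ≤ ‖u‖) :
    ‖a + inner ℂ β v‖ ≤ 1 := by
  have h := hV 1 v
  rw [mul_one, one_smul, hu, norm_one] at h
  exact pow_le_pow_iff_left₀ (norm_nonneg _) zero_le_one two_ne_zero |>.mp <| by
    nlinarith [norm_nonneg v]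

end Colligation

theorem add_apply_ring_inverse_one_sub {𝕜 E : Type*} [NontriviallyNormedField 𝕜]
    [NormedAddCommGroup E] [NormedSpace 𝕜 E] [CompleteSpace E] {T : E →L[𝕜] E} (hT : ‖T‖ < 1)
    (γ : E) :
    γ + T (Ring.inverse (1 - T) γ) = Ring.inverse (1 - T) γ := by
  have h : ((1 - T) * Ring.inverse (1 - T)) γ = γ := by
    rw [Ring.mul_inverse_cancel _ (isUnit_one_sub_of_norm_lt_one hT), one_apply_eq_self]
  rw [mul_apply_eq_comp, sub_apply, one_apply_eq_self] at h
  exact (sub_eq_iff_eq_add.mp h).symm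

theorem PiLp.norm_le_of_eq_smul {𝕜 ι : Type*} [NormedField 𝕜] [Fintype ι] {M : ι → Type*}
    [∀ l, SeminormedAddCommGroup (M l)] [∀ l, NormedSpace 𝕜 (M l)] (z : ι → 𝕜) {x y : PiLp 2 M}
    (h : ∀ l, y l = z l • x l) : ‖y‖ ≤ ‖z‖ * ‖x‖ := by
  refine pow_le_pow_iff_left₀ (norm_nonneg _) (by positivity) two_ne_zero |>.mp ?_
  rw [PiLp.norm_sq_eq_of_L2, mul_pow, PiLp.norm_sq_eq_of_L2, Finset.mul_sum]
  refine Finset.sum_le_sum fun l _ => ?_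
  rw [h, norm_smul, mul_pow]
  gcongr
  exact norm_le_pi_norm z l

/-- Suppose `φ : G_δ → ℂ` has a realization
`φ(λ) = a + ⟨δ(λ)(1 − D δ(λ))⁻¹ γ, β⟩` where `V = [[a, 1⊗β],[γ⊗1, D]]` acts
isometrically on `ℂ ⊕ M` for a decomposed Hilbert space `M = ⊕_{l=1}^m M_l`, and `δ(λ)`
acts diagonally on `M` by `δ(λ)(⊕ x_l) = ⊕ δ_l(λ) x_l`.  Then `|φ(λ)| ≤ 1` for every
`λ ∈ G_δ`. -/
theorem realization_implies_contractive {d m : ℕ} (δ : Fin m → MvPolynomial (Fin d) ℂ)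
    (M : Fin m → Type) [∀ l, NormedAddCommGroup (M l)] [∀ l, InnerProductSpace ℂ (M l)]
    [∀ l, CompleteSpace (M l)]
    (a : ℂ) (β γ : PiLp 2 M) (D : PiLp 2 M →L[ℂ] PiLp 2 M)
    -- the diagonal action of `z ∈ ℂ^m` on `M = ⊕ M_l`:
    (Δ : (Fin m → ℂ) → (PiLp 2 M →L[ℂ] PiLp 2 M))
    (hΔ : ∀ (z : Fin m → ℂ) (x : PiLp 2 M) (l : Fin m),
      (WithLp.equiv 2 (∀ l, M l)) (Δ z x) l = z l • (WithLp.equiv 2 (∀ l, M l)) x l)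
    -- `V = [[a, 1⊗β],[γ⊗1, D]]` is an isometry on `ℂ ⊕ M`:
    (hV : ∀ (c : ℂ) (x : PiLp 2 M),
      ‖a * c + (inner ℂ β x : ℂ)‖ ^ 2 + ‖c • γ + D x‖ ^ 2 =
        ‖c‖ ^ 2 + ‖x‖ ^ 2)
    -- `φ` is given on `G_δ` by the transfer function of the realization:
    (φ : (Fin d → ℂ) → ℂ)
    (hφ : ∀ lam : Fin d → ℂ, (∀ l, ‖MvPolynomial.eval lam (δ l)‖ < 1) →
      φ lam = a + (inner ℂ β
        (Δ (fun l => MvPolynomial.eval lam (δ l))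
          (Ring.inverse (1 - D ∘L Δ (fun l => MvPolynomial.eval lam (δ l))) γ)) : ℂ)) :
    ∀ lam : Fin d → ℂ, (∀ l, ‖MvPolynomial.eval lam (δ l)‖ < 1) →
      ‖φ lam‖ ≤ 1 := by
  intro lam hlam
  set z : Fin m → ℂ := fun l => MvPolynomial.eval lam (δ l)
  have hz : ‖z‖ < 1 := (pi_norm_lt_iff one_pos).2 hlam
  have hΔz : ‖Δ z‖ ≤ ‖z‖ :=
    opNorm_le_bound _ (norm_nonneg _) fun x => PiLp.norm_le_of_eq_smul z (hΔ z x)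
  have hD := IsIsometricColligation.opNorm_le_one hV
  have hDΔz : ‖D ∘L Δ z‖ < 1 := calc
    ‖D ∘L Δ z‖ ≤ ‖D‖ * ‖Δ z‖ := opNorm_comp_le _ _
    _ ≤ 1 * ‖z‖ := by gcongr
    _ < 1 := by rwa [one_mul]
  set u := Ring.inverse (1 - D ∘L Δ z) γ
  rw [hφ lam hlam]
  refine IsIsometricColligation.norm_add_inner_le_one hV
    (add_apply_ring_inverse_one_sub hDΔz γ) ?_
  calc ‖Δ z u‖ ≤ ‖z‖ * ‖u‖ := (Δ z).le_of_opNorm_le hΔz u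
    _ ≤ ‖u‖ := mul_le_of_le_one_left (norm_nonneg _) hz.le
end
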